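/- Fix γ ∈ (0, 1) and β ∈ (0, 1]. For n₁ ≥ n₂ > 0 with ratio r = n₂/n₁, let λ̃₁(r) = r·((1 − ((4+γ²)/(4γ)) r^β (1 − (1/(1+r))^β))^{−1/β} − 1) (the non-unit branch of the bargaining solution, which applies for all sufficiently small r). Then as r → 0⁺, λ̃₁(r) = ((4+γ²)/(4γ)) r^{β+2} (1 + o(1)); that is, the limit of λ̃₁(r) / r^{β+2} as r → 0⁺ equals (4+γ²)/(4γ). -/

import Mathlib

/-- The non-unit branch of the Nash bargaining solution `λ̃₁`, as a function of the data
ratio `r = n₂/n₁`. -/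
noncomputable def lamBranch (γ β r : ℝ) : ℝ :=
  r * ((1 - ((4 + γ ^ 2) / (4 * γ)) * r ^ β *
      (1 - (1 / (1 + r)) ^ β)) ^ (-(1 / β)) - 1)

/-!
With `C = (4+γ²)/(4γ)` and `u(r) = C r^β (1 - (1+r)^{-β}) → 0`, two first-order expansions at `0`
give the asymptotics: `(1 - u)^{-1/β} - 1 ~ u/β` and `1 - (1+r)^{-β} ~ β r`. Hence
`λ̃₁(r) = r ((1 - u)^{-1/β} - 1) ~ r · (C/β) r^β · β r = C r^{β+2}`.
-/

open Filter Topology Asymptotics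

theorem HasDerivAt.isEquivalent_sub {𝕜 F : Type*} [NontriviallyNormedField 𝕜]
    [NormedAddCommGroup F] [NormedSpace 𝕜 F] {f : 𝕜 → F} {f' : F} {x : 𝕜}
    (hf : HasDerivAt f f' x) (hf' : f' ≠ 0) :
    (fun y => f y - f x) ~[𝓝 x] fun y => (y - x) • f' :=
  (HasDerivAtFilter.isEquivalent_sub hf hf').comp_tendsto (tendsto_id.prodMk tendsto_const_pure)

theorem hasDerivAt_one_sub_rpow_neg_inv (β : ℝ) :
    HasDerivAt (fun u : ℝ => (1 - u) ^ (-(1 / β))) (1 / β) 0 := by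
  simpa using ((hasDerivAt_id (0 : ℝ)).const_sub 1).rpow_const (p := -(1 / β)) (by norm_num)

theorem hasDerivAt_one_sub_one_div_one_add_rpow (β : ℝ) :
    HasDerivAt (fun r : ℝ => 1 - (1 / (1 + r)) ^ β) β 0 := by
  have hinv : HasDerivAt (fun r : ℝ => 1 / (1 + r)) (-1) 0 := by
    simpa using ((hasDerivAt_id (0 : ℝ)).const_add 1).fun_inv (by norm_num)
  simpa using (hinv.rpow_const (p := β) (by norm_num)).const_sub 1

theorem isEquivalent_mul_one_sub_rpow_neg_inv_sub_one (C β : ℝ) (hβ : 0 < β) :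
    (fun r => r * ((1 - C * r ^ β * (1 - (1 / (1 + r)) ^ β)) ^ (-(1 / β)) - 1))
      ~[𝓝[>] 0] fun r => C * r ^ (β + 2) := by
  set g : ℝ → ℝ := fun r => 1 - (1 / (1 + r)) ^ β
  have hg : g ~[𝓝[>] 0] fun r => β * r := by
    simpa [g, mul_comm] using
      ((hasDerivAt_one_sub_one_div_one_add_rpow β).isEquivalent_sub hβ.ne').mono
        nhdsWithin_le_nhds
  have hu : Tendsto (fun r => C * r ^ β * g r) (𝓝[>] 0) (𝓝 0) := by
    have hrpow : Tendsto (fun r : ℝ => r ^ β) (𝓝[>] 0) (𝓝 0) := by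
      simpa [Real.zero_rpow hβ.ne'] using
        (Real.continuousAt_rpow_const 0 β (Or.inr hβ.le)).tendsto.mono_left nhdsWithin_le_nhds
    have hg0 : Tendsto g (𝓝[>] 0) (𝓝 0) := by
      simpa [g] using
        (hasDerivAt_one_sub_one_div_one_add_rpow β).continuousAt.tendsto.mono_left
          nhdsWithin_le_nhds
    simpa using (hrpow.const_mul C).mul hg0
  have hf : (fun r => (1 - C * r ^ β * g r) ^ (-(1 / β)) - 1) ~[𝓝[>] 0]
      fun r => C / β * r ^ β * g r := by
    have h := ((hasDerivAt_one_sub_rpow_neg_inv β).isEquivalent_sub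
      (one_div_ne_zero hβ.ne')).comp_tendsto hu
    simp only [Function.comp_def, sub_zero, Real.one_rpow, smul_eq_mul] at h
    exact h.congr_right (Eventually.of_forall fun r => by ring)
  have hprod : (fun r => r * ((1 - C * r ^ β * g r) ^ (-(1 / β)) - 1)) ~[𝓝[>] 0]
      fun r => r * (C / β * r ^ β * (β * r)) :=
    IsEquivalent.refl.mul (hf.trans (IsEquivalent.refl.mul hg))
  refine hprod.congr_right ?_
  filter_upwards [self_mem_nhdsWithin] with r (hr : 0 < r)
  rw [Real.rpow_add hr, Real.rpow_two]
  field_simp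

theorem lamBranch_asymptotics_general
    (γ β : ℝ) (hβ₁ : 0 < β) :
    Filter.Tendsto (fun r => lamBranch γ β r / r ^ (β + 2))
      (nhdsWithin 0 (Set.Ioi 0)) (nhds ((4 + γ ^ 2) / (4 * γ))) := by
  have hequiv := isEquivalent_mul_one_sub_rpow_neg_inv_sub_one ((4 + γ ^ 2) / (4 * γ)) β hβ₁
  refine (hequiv.div IsEquivalent.refl).symm.tendsto_nhds (tendsto_const_nhds.congr' ?_)
  filter_upwards [self_mem_nhdsWithin] with r (hr : 0 < r)
  simp [(Real.rpow_pos_of_pos hr _).ne']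

/-- **Asymptotics of the bargaining share (from Theorem 2).** For `γ ∈ (0,1)` and
`β ∈ (0,1]`, as the data ratio `r = n₂/n₁ → 0⁺`,
`λ̃₁(r) = ((4+γ²)/(4γ)) r^{β+2} (1 + o(1))`; i.e. `λ̃₁(r)/r^{β+2} → (4+γ²)/(4γ)`. -/
theorem lamBranch_asymptotics
    (γ β : ℝ) (hγ₁ : 0 < γ) (hγ₂ : γ < 1) (hβ₁ : 0 < β) (hβ₂ : β ≤ 1) :
    Filter.Tendsto (fun r => lamBranch γ β r / r ^ (β + 2))
      (nhdsWithin 0 (Set.Ioi 0)) (nhds ((4 + γ ^ 2) / (4 * γ))) :=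
  lamBranch_asymptotics_general γ β hβ₁
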